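/- arXiv:1801.01796 — 7 statements merged into one kernel-verified Lean document; each statement's English description precedes it below -/
import Mathlib

section
/- Let M ≥ 2 be an integer and let U_1, …, U_M be i.i.d. standard Gaussian random variables. For τ > 0 define E(τ) = E[ e^{U_1/√τ} / ( e^{U_1/√τ} + e^{−1/τ} Σ_{j=2}^{M} e^{U_j/√τ} ) ]. Fix R > 0, an integer L_R ≥ 1, nonnegative reals W_1, …, W_{L_R} not all zero, and positive reals φ_1, …, φ_{L_R}, and for each M set τ_M = (R/ln M) · [ (1/L_R) Σ_{r=1}^{L_R} W_r/φ_r ]^{−1}. Then, as M → ∞, E(τ_M) converges to 1 if (1/L_R) Σ_{r=1}^{L_R} W_r/φ_r > 2R, and E(τ_M) converges to 0 if (1/L_R) Σ_{r=1}^{L_R} W_r/φ_r < 2R. -/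
open MeasureTheory ProbabilityTheory Filter

/-- The state-evolution expectation `E(τ)` for section size `M`:
the expectation over i.i.d. standard Gaussians `U_1, …, U_M` of
`e^{U_1/√τ} / (e^{U_1/√τ} + e^{-1/τ} Σ_{j=2}^M e^{U_j/√τ})`. -/
noncomputable def SEexpectation (M : ℕ) (τ : ℝ) : ℝ :=
  ∫ u : Fin M → ℝ,
    (if h : 0 < M then
      Real.exp (u ⟨0, h⟩ / Real.sqrt τ) /
        (Real.exp (u ⟨0, h⟩ / Real.sqrt τ) +
          Real.exp (-(1 / τ)) *
            ∑ j ∈ Finset.univ.erase (⟨0, h⟩ : Fin M), Real.exp (u j / Real.sqrt τ))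
    else 0)
    ∂(Measure.pi fun _ : Fin M => gaussianReal 0 1)

open Real Set Topology

/-!
Write `c` for the averaged ratio `(1/L_R) Σ W_r/φ_r`, `r = √(c / (2R))` and `x = √(2 log M)`, so
that `M = e^{x²/2}`, `1/√τ_M = r x` and `e^{-1/τ_M} = e^{-(r x)²}`: the integrand is the softmax
weight of the score `r x U_1` against the scores `r x U_j`, `j ≥ 2`, damped by `e^{-(r x)²}`.

If `r > 1`, the damped competitors have expected total mass
`M e^{-(r x)²} E e^{r x U} = e^{-(r² - 1) x²/2}`; together with the Gaussian tail of `U_1` at `-b`,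
for `b` a small multiple of `x`, this makes the expected weight `1 - O(e^{-κ x²})`.

If `r < 1`, fix `γ ∈ (r, 1)`. Since `M φ(γ x) → ∞` for the Gaussian density `φ`, some competitor
exceeds `γ x` with probability tending to `1`, and then it alone outweighs the first score unless
`U_1` exceeds a suitable multiple of `x`, because `γ r x² > (r x)²`.
-/

lemma integral_exp_mul_gaussianReal (t : ℝ) :
    ∫ x, exp (t * x) ∂gaussianReal 0 1 = exp (t ^ 2 / 2) := by
  simpa [mgf] using congrFun (mgf_fun_id_gaussianReal (μ := 0) (v := 1)) t

lemma gaussianReal_real_Ici_le {t : ℝ} (ht : 0 ≤ t) :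
    (gaussianReal 0 1).real (Ici t) ≤ exp (-(t ^ 2 / 2)) := by
  have h := measure_ge_le_exp_mul_mgf (X := id) (μ := gaussianReal 0 1) t ht
    (integrable_exp_mul_gaussianReal t)
  rw [mgf_id_gaussianReal, ← exp_add] at h
  refine h.trans_eq (congrArg exp ?_)
  push_cast
  ring

lemma gaussianReal_real_Iic_neg_le {t : ℝ} (ht : 0 ≤ t) :
    (gaussianReal 0 1).real (Iic (-t)) ≤ exp (-(t ^ 2 / 2)) := by
  have h := measure_le_le_exp_mul_mgf (X := id) (μ := gaussianReal 0 1) (-t) (neg_nonpos.2 ht)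
    (integrable_exp_mul_gaussianReal (-t))
  rw [mgf_id_gaussianReal, ← exp_add] at h
  refine h.trans_eq (congrArg exp ?_)
  push_cast
  ring

lemma gaussianPDFReal_le_of_abs_le {x y : ℝ} (h : |x| ≤ |y|) :
    gaussianPDFReal 0 1 y ≤ gaussianPDFReal 0 1 x := by
  simp only [gaussianPDFReal, sub_zero]
  gcongr _ * exp (-?_ / _)
  exact sq_le_sq.2 h

lemma gaussianPDFReal_add_one_le_real_Ioi {t : ℝ} (ht : 0 ≤ t) :
    gaussianPDFReal 0 1 (t + 1) ≤ (gaussianReal 0 1).real (Ioi t) := by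
  calc gaussianPDFReal 0 1 (t + 1) = ∫ _ in Ioc t (t + 1), gaussianPDFReal 0 1 (t + 1) := by
        simp
    _ ≤ ∫ x in Ioc t (t + 1), gaussianPDFReal 0 1 x :=
        setIntegral_mono_on (integrableOn_const (by simp))
          (integrable_gaussianPDFReal 0 1).integrableOn measurableSet_Ioc fun x hx =>
            gaussianPDFReal_le_of_abs_le (by
              rw [abs_of_nonneg (ht.trans hx.1.le), abs_of_nonneg (by linarith)]; exact hx.2)
    _ = (gaussianReal 0 1).real (Ioc t (t + 1)) := by
        rw [measureReal_def, gaussianReal_apply_eq_integral 0 one_ne_zero,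
          ENNReal.toReal_ofReal (setIntegral_nonneg measurableSet_Ioc
            fun x _ => gaussianPDFReal_nonneg 0 1 x)]
    _ ≤ (gaussianReal 0 1).real (Ioi t) := measureReal_mono Ioc_subset_Ioi_self

lemma gaussianReal_real_Iic_pow_le {t : ℝ} (ht : 0 ≤ t) (n : ℕ) :
    (gaussianReal 0 1).real (Iic t) ^ n ≤ exp (-(n * gaussianPDFReal 0 1 (t + 1))) := by
  have hq : (gaussianReal 0 1).real (Iic t) = 1 - (gaussianReal 0 1).real (Ioi t) := by
    rw [← compl_Ioi, probReal_compl_eq_one_sub measurableSet_Ioi]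
  calc (gaussianReal 0 1).real (Iic t) ^ n ≤ exp (-(gaussianReal 0 1).real (Ioi t)) ^ n := by
        gcongr
        rw [hq]; linarith [add_one_le_exp (-(gaussianReal 0 1).real (Ioi t))]
    _ ≤ exp (-(n * gaussianPDFReal 0 1 (t + 1))) := by
        rw [← exp_nat_mul, exp_le_exp]
        have := gaussianPDFReal_add_one_le_real_Ioi ht
        nlinarith [(n.cast_nonneg : (0:ℝ) ≤ n)]

section SoftmaxWeight

variable {ι : Type*} [Fintype ι]

local notation "𝒩" => Measure.pi fun _ : ι => gaussianReal 0 1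

lemma integral_exp_mul_eval_pi_gaussianReal (s : ℝ) (j : ι) :
    ∫ u, exp (s * u j) ∂𝒩 = exp (s ^ 2 / 2) :=
  (integral_comp_eval (μ := fun _ : ι => gaussianReal 0 1) (f := fun x => exp (s * x))
    (by fun_prop)).trans (integral_exp_mul_gaussianReal s)

variable [DecidableEq ι]

noncomputable def softmaxWeight (i : ι) (s e : ℝ) (u : ι → ℝ) : ℝ :=
  exp (s * u i) / (exp (s * u i) + e * ∑ j ∈ Finset.univ.erase i, exp (s * u j))

variable {i : ι} {s e : ℝ}

lemma softmaxWeight_nonneg (he : 0 ≤ e) (u : ι → ℝ) : 0 ≤ softmaxWeight i s e u := by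
  unfold softmaxWeight
  positivity

lemma softmaxWeight_le_one (he : 0 ≤ e) (u : ι → ℝ) : softmaxWeight i s e u ≤ 1 := by
  unfold softmaxWeight
  rw [div_le_one (by positivity)]
  exact le_add_of_nonneg_right (by positivity)

lemma integrable_softmaxWeight {μ : Measure (ι → ℝ)} [IsFiniteMeasure μ] (he : 0 ≤ e) :
    Integrable (softmaxWeight i s e) μ := by
  have hmeas : Measurable (softmaxWeight i s e) := by
    unfold softmaxWeight
    fun_prop
  refine (integrable_const 1).mono' hmeas.aestronglyMeasurable (ae_of_all _ fun u => ?_)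
  rw [norm_of_nonneg (softmaxWeight_nonneg he u)]
  exact softmaxWeight_le_one he u

lemma one_sub_softmaxWeight_le (hs : 0 ≤ s) (he : 0 ≤ e) (b : ℝ) (u : ι → ℝ) :
    1 - softmaxWeight i s e u ≤
      (Iic (-b)).indicator 1 (u i) +
        e * exp (s * b) * ∑ j ∈ Finset.univ.erase i, exp (s * u j) := by
  set D := e * ∑ j ∈ Finset.univ.erase i, exp (s * u j)
  have hD : 0 ≤ D := by positivity
  rcases le_or_gt (u i) (-b) with hu | hu
  · rw [indicator_of_mem (show u i ∈ Iic (-b) from hu), Pi.one_apply]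
    have : 0 ≤ e * exp (s * b) * ∑ j ∈ Finset.univ.erase i, exp (s * u j) := by positivity
    linarith [softmaxWeight_nonneg (i := i) (s := s) he u]
  · rw [indicator_of_notMem (show u i ∉ Iic (-b) from not_le.2 hu), zero_add]
    have hN : exp (-(s * b)) ≤ exp (s * u i) := exp_le_exp.2 (by nlinarith)
    calc 1 - softmaxWeight i s e u = D / (exp (s * u i) + D) := by
          unfold softmaxWeight
          field_simp
          ring
      _ ≤ D / exp (s * u i) := div_le_div_of_nonneg_left hD (exp_pos _) (by linarith)
      _ ≤ D / exp (-(s * b)) := div_le_div_of_nonneg_left hD (exp_pos _) hN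
      _ = e * exp (s * b) * ∑ j ∈ Finset.univ.erase i, exp (s * u j) := by
          rw [exp_neg, div_inv_eq_mul]
          ring

lemma softmaxWeight_le (hs : 0 ≤ s) (he : 0 < e) (b t : ℝ) (u : ι → ℝ) :
    softmaxWeight i s e u ≤ (Ici b).indicator 1 (u i) +
      ((Finset.univ.erase i : Set ι).pi fun _ => Iic t).indicator 1 u +
        exp (s * (b - t)) / e := by
  have hw := softmaxWeight_le_one (i := i) (s := s) he.le u
  have h₁ : 0 ≤ (Ici b).indicator (1 : ℝ → ℝ) (u i) := indicator_nonneg (by simp) _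
  have h₂ : 0 ≤ ((Finset.univ.erase i : Set ι).pi fun _ => Iic t).indicator
      (1 : (ι → ℝ) → ℝ) u :=
    indicator_nonneg (by simp) _
  have h₃ : 0 ≤ exp (s * (b - t)) / e := by positivity
  by_cases hb : b ≤ u i
  · rw [indicator_of_mem (show u i ∈ Ici b from hb), Pi.one_apply]
    linarith
  by_cases hall : u ∈ (Finset.univ.erase i : Set ι).pi fun _ => Iic t
  · rw [indicator_of_mem hall, Pi.one_apply]
    linarith
  obtain ⟨j, hj, hjt⟩ : ∃ j ∈ Finset.univ.erase i, t < u j := by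
    simpa [Set.mem_pi] using hall
  have hsum : exp (s * t) ≤ ∑ j ∈ Finset.univ.erase i, exp (s * u j) :=
    (exp_le_exp.2 (mul_le_mul_of_nonneg_left hjt.le hs)).trans
      (Finset.single_le_sum (f := fun j => exp (s * u j)) (fun j _ => (exp_pos _).le) hj)
  have hD : e * exp (s * t) ≤ e * ∑ j ∈ Finset.univ.erase i, exp (s * u j) :=
    mul_le_mul_of_nonneg_left hsum he.le
  calc softmaxWeight i s e u
      ≤ exp (s * u i) / (e * ∑ j ∈ Finset.univ.erase i, exp (s * u j)) :=
        div_le_div_of_nonneg_left (exp_pos _).le ((mul_pos he (exp_pos _)).trans_le hD)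
          (le_add_of_nonneg_left (exp_pos _).le)
    _ ≤ exp (s * b) / (e * exp (s * t)) :=
        div_le_div₀ (exp_pos _).le (exp_le_exp.2 (mul_le_mul_of_nonneg_left (not_le.1 hb).le hs))
          (by positivity) hD
    _ = exp (s * (b - t)) / e := by
        rw [mul_sub, exp_sub]
        field_simp
    _ ≤ _ := by linarith

variable (i s e)

lemma one_sub_integral_softmaxWeight_le (hs : 0 ≤ s) (he : 0 ≤ e) {b : ℝ} (hb : 0 ≤ b) :
    1 - ∫ u, softmaxWeight i s e u ∂𝒩 ≤
      exp (-(b ^ 2 / 2)) + Fintype.card ι * e * exp (s * b + s ^ 2 / 2) := by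
  have hexp : ∀ j, Integrable (fun u : ι → ℝ => exp (s * u j)) 𝒩 := fun j =>
    integrable_comp_eval (μ := fun _ : ι => gaussianReal 0 1) (i := j)
      (integrable_exp_mul_gaussianReal s)
  have hind : Integrable (fun u : ι → ℝ => (Iic (-b)).indicator (1 : ℝ → ℝ) (u i)) 𝒩 :=
    integrable_comp_eval ((integrable_const 1).indicator measurableSet_Iic)
  calc 1 - ∫ u, softmaxWeight i s e u ∂𝒩 = ∫ u, (1 - softmaxWeight i s e u) ∂𝒩 := by
        rw [integral_sub (integrable_const 1) (integrable_softmaxWeight he)]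
        simp
    _ ≤ ∫ u, ((Iic (-b)).indicator 1 (u i) +
          e * exp (s * b) * ∑ j ∈ Finset.univ.erase i, exp (s * u j)) ∂𝒩 :=
        integral_mono ((integrable_const 1).sub (integrable_softmaxWeight he))
          (hind.add ((integrable_finsetSum _ fun j _ => hexp j).const_mul _))
          (one_sub_softmaxWeight_le hs he b)
    _ = (gaussianReal 0 1).real (Iic (-b)) +
          e * exp (s * b) * ((Finset.univ.erase i).card * exp (s ^ 2 / 2)) := by
        rw [integral_add hind ((integrable_finsetSum _ fun j _ => hexp j).const_mul _),
          integral_const_mul, integral_finsetSum _ fun j _ => hexp j,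
          integral_comp_eval (μ := fun _ : ι => gaussianReal 0 1) (i := i)
            (f := (Iic (-b)).indicator 1)
            (measurable_const.indicator measurableSet_Iic).aestronglyMeasurable,
          integral_indicator_one measurableSet_Iic]
        simp_rw [integral_exp_mul_eval_pi_gaussianReal, Finset.sum_const, nsmul_eq_mul]
    _ ≤ exp (-(b ^ 2 / 2)) + Fintype.card ι * e * exp (s * b + s ^ 2 / 2) := by
        rw [exp_add]
        gcongr ?_ + ?_
        · exact gaussianReal_real_Iic_neg_le hb
        · have : ((Finset.univ.erase i).card : ℝ) ≤ Fintype.card ι := by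
            exact_mod_cast (Finset.card_erase_le).trans_eq Finset.card_univ
          calc e * exp (s * b) * ((Finset.univ.erase i).card * exp (s ^ 2 / 2))
              = (Finset.univ.erase i).card * e * (exp (s * b) * exp (s ^ 2 / 2)) := by ring
            _ ≤ _ := by gcongr

lemma integral_softmaxWeight_le (hs : 0 ≤ s) (he : 0 < e) {b : ℝ} (hb : 0 ≤ b) (t : ℝ) :
    ∫ u, softmaxWeight i s e u ∂𝒩 ≤ exp (-(b ^ 2 / 2)) +
      (gaussianReal 0 1).real (Iic t) ^ (Fintype.card ι - 1) + exp (s * (b - t)) / e := by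
  have hbox : MeasurableSet ((Finset.univ.erase i : Set ι).pi fun _ => Iic t) :=
    MeasurableSet.pi (Finset.univ.erase i).countable_toSet fun _ _ => measurableSet_Iic
  have hind : Integrable (fun u : ι → ℝ => (Ici b).indicator (1 : ℝ → ℝ) (u i)) 𝒩 :=
    integrable_comp_eval ((integrable_const 1).indicator measurableSet_Ici)
  have hboxInt : Integrable (((Finset.univ.erase i : Set ι).pi fun _ => Iic t).indicator
      (1 : (ι → ℝ) → ℝ)) 𝒩 :=
    (integrable_const (1 : ℝ)).indicator hbox
  calc ∫ u, softmaxWeight i s e u ∂𝒩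
      ≤ ∫ u, ((Ici b).indicator 1 (u i) +
          ((Finset.univ.erase i : Set ι).pi fun _ => Iic t).indicator 1 u +
            exp (s * (b - t)) / e) ∂𝒩 :=
        integral_mono (integrable_softmaxWeight he.le)
          ((hind.add hboxInt).add (integrable_const _))
          (softmaxWeight_le hs he b t)
    _ = (gaussianReal 0 1).real (Ici b) +
          (gaussianReal 0 1).real (Iic t) ^ (Fintype.card ι - 1) + exp (s * (b - t)) / e := by
        rw [integral_add ?_ (integrable_const _), integral_add hind hboxInt,
          integral_comp_eval (μ := fun _ : ι => gaussianReal 0 1) (i := i)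
            (f := (Ici b).indicator 1)
            (measurable_const.indicator measurableSet_Ici).aestronglyMeasurable,
          integral_indicator_one measurableSet_Ici, integral_indicator_one hbox,
          measureReal_def (μ := Measure.pi _),
          Measure.pi_pi_finset, ENNReal.toReal_prod, Finset.prod_const,
          Finset.card_erase_of_mem (Finset.mem_univ i), Finset.card_univ]
        · simp [measureReal_def]
        · exact hind.add hboxInt
    _ ≤ _ := by gcongr; exact gaussianReal_real_Ici_le hb

lemma one_sub_integral_softmaxWeight_le_of_one_lt {r x : ℝ} (hr : 1 < r) (hx : 0 ≤ x)
    (hcard : (Fintype.card ι : ℝ) ≤ exp (x ^ 2 / 2)) :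
    1 - ∫ u, softmaxWeight i (r * x) (exp (-(r * x) ^ 2)) u ∂𝒩 ≤
      exp (-(((r ^ 2 - 1) / (4 * r)) ^ 2 / 2 * x ^ 2)) + exp (-((r ^ 2 - 1) / 4 * x ^ 2)) := by
  have hr₀ : 0 < r := one_pos.trans hr
  -- `b = β x` with `β r = (r² - 1)/4`, half of the margin `(r² - 1)/2`
  have hβ : 0 ≤ (r ^ 2 - 1) / (4 * r) := div_nonneg (by nlinarith) (by positivity)
  calc 1 - ∫ u, softmaxWeight i (r * x) (exp (-(r * x) ^ 2)) u ∂𝒩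
      ≤ exp (-(((r ^ 2 - 1) / (4 * r) * x) ^ 2 / 2)) + Fintype.card ι * exp (-(r * x) ^ 2) *
          exp (r * x * ((r ^ 2 - 1) / (4 * r) * x) + (r * x) ^ 2 / 2) :=
        one_sub_integral_softmaxWeight_le i _ _ (by positivity) (exp_pos _).le (mul_nonneg hβ hx)
    _ ≤ exp (-(((r ^ 2 - 1) / (4 * r) * x) ^ 2 / 2)) +
          exp (x ^ 2 / 2) * exp (-(r * x) ^ 2) *
            exp (r * x * ((r ^ 2 - 1) / (4 * r) * x) + (r * x) ^ 2 / 2) := by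
        gcongr
    _ = exp (-(((r ^ 2 - 1) / (4 * r)) ^ 2 / 2 * x ^ 2)) +
          exp (-((r ^ 2 - 1) / 4 * x ^ 2)) := by
        rw [← exp_add, ← exp_add]
        congr 2
        · ring
        · field_simp
          ring

lemma integral_softmaxWeight_le_of_lt_one {r x : ℝ} (hr₀ : 0 < r) (hr : r < 1) (hx : 0 ≤ x)
    (hcard : exp (x ^ 2 / 2) / 2 ≤ (Fintype.card ι - 1 : ℕ)) :
    ∫ u, softmaxWeight i (r * x) (exp (-(r * x) ^ 2)) u ∂𝒩 ≤
      exp (-(((1 - r) / 4) ^ 2 / 2 * x ^ 2)) +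
        exp (-(exp (x ^ 2 / 2) / 2 * gaussianPDFReal 0 1 ((1 + r) / 2 * x + 1))) +
          exp (-(r * (1 - r) / 4 * x ^ 2)) := by
  -- `t = γ x` with `γ = (1 + r)/2`, and `b = β x` with `β = (γ - r)/2`
  have hb : 0 ≤ (1 - r) / 4 * x := mul_nonneg (by linarith) hx
  have ht : 0 ≤ (1 + r) / 2 * x := by positivity
  calc ∫ u, softmaxWeight i (r * x) (exp (-(r * x) ^ 2)) u ∂𝒩
      ≤ exp (-(((1 - r) / 4 * x) ^ 2 / 2)) +
          (gaussianReal 0 1).real (Iic ((1 + r) / 2 * x)) ^ (Fintype.card ι - 1) +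
            exp (r * x * ((1 - r) / 4 * x - (1 + r) / 2 * x)) / exp (-(r * x) ^ 2) :=
        integral_softmaxWeight_le i _ _ (by positivity) (exp_pos _) hb _
    _ ≤ exp (-(((1 - r) / 4 * x) ^ 2 / 2)) +
          exp (-(exp (x ^ 2 / 2) / 2 * gaussianPDFReal 0 1 ((1 + r) / 2 * x + 1))) +
            exp (r * x * ((1 - r) / 4 * x - (1 + r) / 2 * x)) / exp (-(r * x) ^ 2) := by
        gcongr
        refine (gaussianReal_real_Iic_pow_le ht _).trans ?_
        gcongr
        exact gaussianPDFReal_nonneg 0 1 _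
    _ = _ := by
        rw [← exp_sub]
        ring_nf

end SoftmaxWeight

lemma tendsto_exp_neg_mul_sq_atTop {κ : ℝ} (hκ : 0 < κ) :
    Tendsto (fun x : ℝ => exp (-(κ * x ^ 2))) atTop (𝓝 0) :=
  tendsto_exp_atBot.comp <| tendsto_neg_atTop_atBot.comp <|
    (tendsto_pow_atTop two_ne_zero).const_mul_atTop hκ

lemma tendsto_exp_sq_div_two_mul_gaussianPDFReal_atTop {γ : ℝ} (hγ₀ : 0 ≤ γ) (hγ : γ < 1) :
    Tendsto (fun x : ℝ => exp (x ^ 2 / 2) / 2 * gaussianPDFReal 0 1 (γ * x + 1)) atTop atTop := by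
  have hq : Tendsto (fun x : ℝ => x * ((1 - γ ^ 2) / 2 * x + -γ) + -(1 / 2)) atTop atTop :=
    tendsto_atTop_add_const_right _ _ <| tendsto_id.atTop_mul_atTop₀ <|
      tendsto_atTop_add_const_right _ _ <| tendsto_id.const_mul_atTop (by nlinarith)
  refine ((tendsto_exp_atTop.comp hq).const_mul_atTop
    (inv_pos.2 (by positivity : (0 : ℝ) < 2 * √(2 * π)))).congr fun x => ?_
  simp only [Function.comp, gaussianPDFReal, NNReal.coe_one, mul_one, sub_zero]
  rw [show x * ((1 - γ ^ 2) / 2 * x + -γ) + -(1 / 2) = x ^ 2 / 2 + -(γ * x + 1) ^ 2 / 2 by ring,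
    exp_add, mul_inv]
  ring

lemma tendsto_sqrt_two_mul_log_natCast_atTop :
    Tendsto (fun M : ℕ => √(2 * log M)) atTop atTop :=
  tendsto_sqrt_atTop.comp <|
    (tendsto_log_atTop.comp tendsto_natCast_atTop_atTop).const_mul_atTop two_pos

lemma exp_sq_sqrt_two_mul_log_div_two {M : ℕ} (hM : 1 ≤ M) :
    exp (√(2 * log M) ^ 2 / 2) = M := by
  rw [sq_sqrt (by positivity), mul_div_cancel_left₀ _ two_ne_zero,
    exp_log (by exact_mod_cast hM)]

lemma SEexpectation_eq_integral_softmaxWeight {M : ℕ} (h : 0 < M) (τ : ℝ) :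
    SEexpectation M τ = ∫ u, softmaxWeight (⟨0, h⟩ : Fin M) (√τ)⁻¹ (exp (-(1 / τ))) u
      ∂Measure.pi fun _ => gaussianReal 0 1 := by
  simp only [SEexpectation, dif_pos h, softmaxWeight, div_eq_inv_mul]

lemma SEexpectation_eq_integral_softmaxWeight_sqrt_log {R c : ℝ} (hR : 0 < R) (hc : 0 < c)
    {M : ℕ} (hM : 2 ≤ M) :
    SEexpectation M (R / log M * c⁻¹) =
      ∫ u, softmaxWeight (⟨0, by omega⟩ : Fin M) (√(c / (2 * R)) * √(2 * log M))
        (exp (-(√(c / (2 * R)) * √(2 * log M)) ^ 2)) u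
          ∂Measure.pi fun _ => gaussianReal 0 1 := by
  have hlog : 0 < log M := log_pos (by exact_mod_cast hM)
  have hs : (√(R / log M * c⁻¹))⁻¹ = √(c / (2 * R)) * √(2 * log M) := by
    rw [← sqrt_inv, ← sqrt_mul (by positivity)]
    congr 1
    field_simp
  have he : 1 / (R / log M * c⁻¹) = (√(c / (2 * R)) * √(2 * log M)) ^ 2 := by
    rw [mul_pow, sq_sqrt (by positivity), sq_sqrt (by positivity)]
    field_simp
  rw [SEexpectation_eq_integral_softmaxWeight, hs, he]

theorem tendsto_SEexpectation_of_two_mul_lt {R c : ℝ} (hR : 0 < R) (hc : 2 * R < c) :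
    Tendsto (fun M : ℕ => SEexpectation M (R / log M * c⁻¹)) atTop (𝓝 1) := by
  set r := √(c / (2 * R)) with hr_def
  have hr : 1 < r := by
    rw [lt_sqrt zero_le_one, one_pow, one_lt_div (by positivity)]
    exact hc
  have hG : Tendsto (fun M : ℕ =>
      exp (-(((r ^ 2 - 1) / (4 * r)) ^ 2 / 2 * √(2 * log M) ^ 2)) +
        exp (-((r ^ 2 - 1) / 4 * √(2 * log M) ^ 2))) atTop (𝓝 0) := by
    have hκ : 0 < r ^ 2 - 1 := by nlinarith
    have h := ((tendsto_exp_neg_mul_sq_atTop (κ := ((r ^ 2 - 1) / (4 * r)) ^ 2 / 2)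
      (by positivity)).add (tendsto_exp_neg_mul_sq_atTop (κ := (r ^ 2 - 1) / 4)
        (by positivity))).comp tendsto_sqrt_two_mul_log_natCast_atTop
    rw [add_zero] at h
    exact h
  refine tendsto_of_tendsto_of_tendsto_of_le_of_le'
    (by simpa only [sub_zero] using tendsto_const_nhds.sub hG) tendsto_const_nhds ?_ ?_
  · filter_upwards [eventually_ge_atTop 2] with M hM
    rw [SEexpectation_eq_integral_softmaxWeight_sqrt_log hR (by linarith) hM, ← hr_def]
    have := one_sub_integral_softmaxWeight_le_of_one_lt (⟨0, by omega⟩ : Fin M) hr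
      (sqrt_nonneg _)
      (by rw [exp_sq_sqrt_two_mul_log_div_two (M := M) (by omega), Fintype.card_fin])
    linarith
  · filter_upwards [eventually_ge_atTop 2] with M hM
    rw [SEexpectation_eq_integral_softmaxWeight_sqrt_log hR (by linarith) hM]
    exact (integral_mono (integrable_softmaxWeight (exp_pos _).le) (integrable_const 1)
      (softmaxWeight_le_one (exp_pos _).le)).trans_eq (by simp)

theorem tendsto_SEexpectation_of_lt_two_mul {R c : ℝ} (hR : 0 < R) (hc₀ : 0 < c)
    (hc : c < 2 * R) :
    Tendsto (fun M : ℕ => SEexpectation M (R / log M * c⁻¹)) atTop (𝓝 0) := by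
  set r := √(c / (2 * R)) with hr_def
  have hr₀ : 0 < r := sqrt_pos.2 (by positivity)
  have hr : r < 1 := by
    rw [sqrt_lt' one_pos, one_pow, div_lt_one (by positivity)]
    exact hc
  have hG : Tendsto (fun M : ℕ => exp (-(((1 - r) / 4) ^ 2 / 2 * √(2 * log M) ^ 2)) +
      exp (-(exp (√(2 * log M) ^ 2 / 2) / 2 *
        gaussianPDFReal 0 1 ((1 + r) / 2 * √(2 * log M) + 1))) +
      exp (-(r * (1 - r) / 4 * √(2 * log M) ^ 2))) atTop (𝓝 0) := by
    have h₁ : 0 < 1 - r := by linarith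
    have h := (((tendsto_exp_neg_mul_sq_atTop (κ := ((1 - r) / 4) ^ 2 / 2) (by positivity)).add
      (tendsto_exp_atBot.comp <| tendsto_neg_atTop_atBot.comp <|
        tendsto_exp_sq_div_two_mul_gaussianPDFReal_atTop (γ := (1 + r) / 2) (by positivity)
          (by linarith))).add
      (tendsto_exp_neg_mul_sq_atTop (κ := r * (1 - r) / 4) (by positivity))).comp
        tendsto_sqrt_two_mul_log_natCast_atTop
    rw [add_zero, add_zero] at h
    exact h
  refine tendsto_of_tendsto_of_tendsto_of_le_of_le' tendsto_const_nhds hG ?_ ?_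
  · filter_upwards [eventually_ge_atTop 2] with M hM
    rw [SEexpectation_eq_integral_softmaxWeight_sqrt_log hR hc₀ hM]
    exact integral_nonneg (softmaxWeight_nonneg (exp_pos _).le)
  · filter_upwards [eventually_ge_atTop 2] with M hM
    rw [SEexpectation_eq_integral_softmaxWeight_sqrt_log hR hc₀ hM, ← hr_def]
    refine integral_softmaxWeight_le_of_lt_one _ hr₀ hr (sqrt_nonneg _) ?_
    have hM' : (2 : ℝ) ≤ M := by exact_mod_cast hM
    rw [exp_sq_sqrt_two_mul_log_div_two (M := M) (by omega), Fintype.card_fin,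
      Nat.cast_sub (by omega), Nat.cast_one]
    linarith

theorem stmt_0 (R : ℝ) (hR : 0 < R) (LR : ℕ) (hLR : 1 ≤ LR)
    (W φ : Fin LR → ℝ) (hW : ∀ r, 0 ≤ W r) (hWnz : ∃ r, W r ≠ 0)
    (hφ : ∀ r, 0 < φ r) :
    ((1 : ℝ) / LR * ∑ r, W r / φ r > 2 * R →
      Tendsto
        (fun M : ℕ =>
          SEexpectation M ((R / Real.log M) * ((1 : ℝ) / LR * ∑ r, W r / φ r)⁻¹))
        atTop (nhds 1)) ∧
    ((1 : ℝ) / LR * ∑ r, W r / φ r < 2 * R →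
      Tendsto
        (fun M : ℕ =>
          SEexpectation M ((R / Real.log M) * ((1 : ℝ) / LR * ∑ r, W r / φ r)⁻¹))
        atTop (nhds 0)) := by
  have hc : 0 < (1 : ℝ) / LR * ∑ r, W r / φ r := by
    obtain ⟨r₀, hr₀⟩ := hWnz
    have hsum : 0 < ∑ r, W r / φ r :=
      Finset.sum_pos' (fun r _ => div_nonneg (hW r) (hφ r).le)
        ⟨r₀, Finset.mem_univ _, div_pos ((hW r₀).lt_of_ne' hr₀) (hφ r₀)⟩
    have hLR' : (0 : ℝ) < LR := by exact_mod_cast hLR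
    positivity
  exact ⟨tendsto_SEexpectation_of_two_mul_lt hR, tendsto_SEexpectation_of_lt_two_mul hR hc⟩
end

section
/- Assume R < (1/(2κ)) ln(1 + κ·snr) and ω > ( 1/(e^{2Rκ} − 1) − 1/(κ·snr) )^{−1}. Then in the asymptotic state-evolution recursion for the (ω,Λ) base matrix, the first and last columns decode in the first iteration: ψ̄_1^1 = 0 and ψ̄_Λ^1 = 0. -/
/-- The asymptotic state-evolution variance update for the `(ω, Λ)` base matrix:
`φ_r = σ²(1 + (κ·snr/ω) Σ_{c = c̲_r}^{c̄_r} ψ_c)` with `κ = (Λ+ω-1)/Λ`, `snr = P/σ²`,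
`c̲_r = max(1, r-ω+1)` and `c̄_r = min(r, Λ)`. -/
noncomputable def phiSE (σ2 P : ℝ) (ω Λ : ℕ) (ψ : ℕ → ℝ) (r : ℕ) : ℝ :=
  σ2 * (1 + (((Λ : ℝ) + ω - 1) / Λ) * (P / σ2) / ω *
    ∑ c ∈ Finset.Icc (max 1 (r + 1 - ω)) (min r Λ), ψ c)

/-- The asymptotic state-evolution recursion for the `(ω, Λ)` base matrix:
`ψ_c^0 = 1` and `ψ_c^{t+1} = 1 - 𝟙{(P/ω) Σ_{r=c}^{c+ω-1} 1/φ_r^t > 2R}`. -/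
noncomputable def psiSE (σ2 P R : ℝ) (ω Λ : ℕ) : ℕ → ℕ → ℝ
  | 0 => fun _ => 1
  | t + 1 => fun c =>
      1 - (if 2 * R < P / ω *
              ∑ r ∈ Finset.Icc c (c + ω - 1), (phiSE σ2 P ω Λ (psiSE σ2 P R ω Λ t) r)⁻¹
           then 1 else 0)

/-! At `t = 0` every `ψ` is `1`, so `φ_r⁰` only counts the columns coupled to row `r`; for the
first and for the last column these counts run through `1, …, ω`, and both decoding sums equal
`κ⁻¹ ∑_{j=1}^ω a/(1+ja)` with `a = κ·snr/ω`. Comparing with `∫ a/(1+xa) dx`, this Riemann sum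
dominates `log((1+(ω+1)a)/(1+a))`, and `(1+(ω+1)a)/(1+a) > e^{2Rκ}` is exactly the lower bound on
`ω`, which is positive because `R` is below `(1/(2κ)) log(1+κ·snr)`. -/

open Finset Real

lemma log_add_sub_log_le_div {x a : ℝ} (hx : 0 < x) (hxa : 0 < x + a) :
    log (x + a) - log x ≤ a / x := by
  rw [← log_div hxa.ne' hx.ne']
  calc log ((x + a) / x) ≤ (x + a) / x - 1 := log_le_sub_one_of_pos (div_pos hxa hx)
    _ = a / x := by field_simp; ring

lemma log_sub_log_le_sum_div {a : ℝ} (ha : 0 ≤ a) (n : ℕ) :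
    log (1 + (n + 1) * a) - log (1 + a) ≤ ∑ j ∈ Icc 1 n, a / (1 + j * a) := by
  induction n with
  | zero => simp
  | succ n ih =>
    rw [sum_Icc_succ_top (by omega)]
    have hstep : log (1 + (n + 1) * a + a) - log (1 + (n + 1) * a) ≤ a / (1 + (n + 1) * a) :=
      log_add_sub_log_le_div (by positivity) (by positivity)
    push_cast
    rw [show 1 + (n + 1 + 1) * a = 1 + (n + 1) * a + a by ring]
    linarith

lemma lt_sum_div_one_add_mul {c s : ℝ} {n : ℕ} (hc : 0 < c) (hs : 0 < s)
    (hcap : c < log (1 + s)) (hn : (1 / (exp c - 1) - 1 / s)⁻¹ < n) :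
    c < ∑ j ∈ Icc 1 n, s / n / (1 + j * (s / n)) := by
  set d := exp c - 1
  have hd : 0 < d := by linarith [add_one_lt_exp hc.ne']
  have hds : d < s := by linarith [(lt_log_iff_exp_lt (by linarith)).mp hcap]
  have hgap : 0 < 1 / d - 1 / s := sub_pos.mpr (one_div_lt_one_div_of_lt hd hds)
  have hn_pos : (0 : ℝ) < n := (inv_pos.mpr hgap).trans hn
  have hinv : (n : ℝ)⁻¹ < 1 / d - 1 / s := (inv_lt_comm₀ hgap hn_pos).mp hn
  have hkey : exp c * (1 + s / n) < 1 + (n + 1) * (s / n) := by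
    have : d * (1 / n + 1 / s) < 1 := by
      rw [← lt_div_iff₀' hd]; linarith [one_div (n : ℝ)]
    rw [show exp c = d + 1 by ring]
    field_simp at this ⊢
    nlinarith
  have hlog : c < log (1 + (n + 1) * (s / n)) - log (1 + s / n) := by
    rw [← log_div (by positivity) (by positivity), lt_log_iff_exp_lt (by positivity),
      lt_div_iff₀ (by positivity)]
    exact hkey
  exact hlog.trans_le (log_sub_log_le_sum_div (by positivity) n)

/-- The coefficient `κ·snr/ω` of `phiSE`. -/
noncomputable def seGain (σ2 P : ℝ) (ω Λ : ℕ) : ℝ :=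
  ((Λ : ℝ) + ω - 1) / Λ * (P / σ2) / ω

lemma phiSE_const_one (σ2 P : ℝ) (ω Λ r : ℕ) :
    phiSE σ2 P ω Λ (fun _ => 1) r =
      σ2 * (1 + seGain σ2 P ω Λ * (min r Λ + 1 - max 1 (r + 1 - ω) : ℕ)) := by
  simp only [phiSE, seGain, sum_const, Nat.card_Icc, nsmul_eq_mul, mul_one]

section Windows

variable (σ2 P : ℝ) {ω Λ : ℕ}

lemma sum_inv_phiSE_first_window (hωΛ : ω ≤ Λ) :
    ∑ r ∈ Icc 1 ω, (phiSE σ2 P ω Λ (fun _ => 1) r)⁻¹ =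
      ∑ j ∈ Icc 1 ω, (σ2 * (1 + seGain σ2 P ω Λ * j))⁻¹ := by
  refine sum_congr rfl fun r hr => ?_
  rw [mem_Icc] at hr
  rw [phiSE_const_one, show min r Λ + 1 - max 1 (r + 1 - ω) = r by omega]

lemma sum_inv_phiSE_last_window (hω : 1 ≤ ω) (hωΛ : ω ≤ Λ) :
    ∑ r ∈ Icc Λ (Λ + ω - 1), (phiSE σ2 P ω Λ (fun _ => 1) r)⁻¹ =
      ∑ j ∈ Icc 1 ω, (σ2 * (1 + seGain σ2 P ω Λ * j))⁻¹ := by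
  refine sum_nbij' (fun r => Λ + ω - r) (fun j => Λ + ω - j) ?_ ?_ ?_ ?_ ?_
  all_goals intro r hr; rw [mem_Icc] at hr
  · rw [mem_Icc]; omega
  · rw [mem_Icc]; omega
  · omega
  · omega
  · rw [phiSE_const_one, show min r Λ + 1 - max 1 (r + 1 - ω) = Λ + ω - r by omega]

end Windows

lemma psiSE_one_eq_zero {σ2 P R : ℝ} {ω Λ c : ℕ}
    (h : 2 * R < P / ω * ∑ r ∈ Icc c (c + ω - 1), (phiSE σ2 P ω Λ (fun _ => 1) r)⁻¹) :
    psiSE σ2 P R ω Λ 1 c = 0 := by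
  simp [psiSE, h]

lemma two_mul_lt_mul_sum_inv {σ2 P R κ : ℝ} {ω : ℕ} (hσ2 : 0 < σ2) (hP : 0 < P) (hR : 0 < R)
    (hκ : 0 < κ) (hω : ω ≠ 0) (hcap : 2 * R * κ < log (1 + κ * (P / σ2)))
    (hωbig : (1 / (exp (2 * R * κ) - 1) - 1 / (κ * (P / σ2)))⁻¹ < ω) :
    2 * R < P / ω * ∑ j ∈ Icc 1 ω, (σ2 * (1 + κ * (P / σ2) / ω * j))⁻¹ := by
  have hsum := lt_sum_div_one_add_mul (by positivity) (by positivity) hcap hωbig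
  calc 2 * R = 2 * R * κ / κ := by field_simp
    _ < (∑ j ∈ Icc 1 ω, κ * (P / σ2) / ω / (1 + j * (κ * (P / σ2) / ω))) / κ :=
      div_lt_div_of_pos_right hsum hκ
    _ = P / ω * ∑ j ∈ Icc 1 ω, (σ2 * (1 + κ * (P / σ2) / ω * j))⁻¹ := by
      rw [sum_div, mul_sum]
      refine sum_congr rfl fun j _ => ?_
      have : 0 < 1 + j * (κ * (P / σ2) / ω) := by positivity
      field_simp

theorem stmt_2 (σ2 P R snr κ : ℝ) (ω Λ : ℕ)
    (hσ2 : 0 < σ2) (hP : 0 < P) (hR : 0 < R)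
    (hω : 1 ≤ ω) (hΛ : 2 * ω - 1 ≤ Λ)
    (hsnr : snr = P / σ2) (hκ : κ = ((Λ : ℝ) + ω - 1) / Λ)
    (hRcap : R < 1 / (2 * κ) * Real.log (1 + κ * snr))
    (hωbig : (1 / (Real.exp (2 * R * κ) - 1) - 1 / (κ * snr))⁻¹ < (ω : ℝ)) :
    psiSE σ2 P R ω Λ 1 1 = 0 ∧ psiSE σ2 P R ω Λ 1 Λ = 0 := by
  subst hsnr
  have hωΛ : ω ≤ Λ := by omega
  have hκ_pos : 0 < κ := by
    have : (1 : ℝ) ≤ ω := by exact_mod_cast hω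
    have : (ω : ℝ) ≤ Λ := by exact_mod_cast hωΛ
    rw [hκ]; apply div_pos <;> linarith
  have hcap : 2 * R * κ < log (1 + κ * (P / σ2)) := by
    rw [one_div, inv_mul_eq_div, lt_div_iff₀ (by positivity)] at hRcap
    linarith
  have hdecode : 2 * R < P / ω * ∑ j ∈ Icc 1 ω, (σ2 * (1 + seGain σ2 P ω Λ * j))⁻¹ := by
    rw [show seGain σ2 P ω Λ = κ * (P / σ2) / ω by rw [hκ]; rfl]
    exact two_mul_lt_mul_sum_inv hσ2 hP hR hκ_pos (by omega) hcap hωbig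
  refine ⟨psiSE_one_eq_zero ?_, psiSE_one_eq_zero ?_⟩
  · rwa [Nat.add_sub_cancel_left, sum_inv_phiSE_first_window σ2 P hωΛ]
  · rwa [sum_inv_phiSE_last_window σ2 P hω hωΛ]
end

section
/- Assume R < (1/(2κ)) ln(1 + κ·snr) and ω > ( 1/(e^{2Rκ} − 1) − 1/(κ·snr) )^{−1}, and let c* = min{ ω−1, ⌊ ω·((1 + κ·snr)/(κ·snr)²)·( ln(1 + κ·snr) − 2Rκ ) ⌋ }. Then in the asymptotic state-evolution recursion for the (ω,Λ) base matrix, the first and last c* columns decode in the first iteration: ψ̄_c^1 = 0 for every c ∈ {1,…,c*} ∪ {Λ−c*+1,…,Λ}. -/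
/-! Initially `ψ ≡ 1`, so `φ_r^0` is affine in the number `min(r, ω, Λ + ω - r)` of columns
meeting row `r`; this is symmetric under `r ↦ Λ + ω - r`, which carries column `Λ + 1 - c` onto
column `c`, so only the first `c*` columns need checking. For `1 ≤ c < ω`, the rows `r ≥ ω` of
column `c` contribute `c / (1 + κ snr)` to the decoding sum, and the rows `c ≤ r < ω` form a left
Riemann sum of the decreasing function `1 / (1 + κ snr x / ω)`, hence are at least
`ω / (κ snr) · (log (1 + κ snr) - log (1 + κ snr c / ω))`. Bounding the last logarithm by
`κ snr c / ω` (strictly), the decoding condition reduces to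
`c ≤ ω (1 + κ snr) / (κ snr)² · (log (1 + κ snr) - 2 R κ)`, which is the defining bound of `c*`. -/

open Finset Real

lemma log_sub_log_le_mul_sum_inv {b : ℝ} (hb : 0 ≤ b) {m n : ℕ} (hmn : m ≤ n) :
    log (1 + b * n) - log (1 + b * m) ≤ b * ∑ r ∈ Ico m n, (1 + b * r)⁻¹ := by
  induction n, hmn using Nat.le_induction with
  | base => simp
  | succ n hmn ih =>
    have hx : 0 < 1 + b * n := by positivity
    have hstep : log (1 + b * (n + 1 : ℕ)) - log (1 + b * n) ≤ b * (1 + b * n)⁻¹ := by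
      rw [← log_div (by positivity) hx.ne']
      calc log ((1 + b * (n + 1 : ℕ)) / (1 + b * n))
          ≤ (1 + b * (n + 1 : ℕ)) / (1 + b * n) - 1 := log_le_sub_one_of_pos (by positivity)
        _ = b * (1 + b * n)⁻¹ := by field_simp; push_cast; ring
    rw [sum_Ico_succ_top hmn, mul_add]
    linarith

lemma lt_sum_inv_one_add_div_mul_min {a : ℝ} (ha : 0 < a) {ω c : ℕ} (hc : 1 ≤ c) (hcω : c ≤ ω) :
    ω / a * log (1 + a) - c * a / (1 + a) <
      ∑ r ∈ Ico c (c + ω), (1 + a / ω * (min r ω : ℕ))⁻¹ := by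
  have hω : (0 : ℝ) < ω := by exact_mod_cast (show 0 < ω by omega)
  have hc0 : (0 : ℝ) < c := by exact_mod_cast hc
  rw [← sum_Ico_consecutive _ hcω (by omega : ω ≤ c + ω)]
  have hhead : ω / a * log (1 + a) - c < ∑ r ∈ Ico c ω, (1 + a / ω * (min r ω : ℕ))⁻¹ := by
    have hmin : ∑ r ∈ Ico c ω, (1 + a / ω * (min r ω : ℕ))⁻¹ = ∑ r ∈ Ico c ω, (1 + a / ω * r)⁻¹ :=
      sum_congr rfl fun r hr => by rw [min_eq_left (mem_Ico.1 hr).2.le]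
    have htele := log_sub_log_le_mul_sum_inv (div_pos ha hω).le hcω
    have hlog : log (1 + a / ω * c) < a / ω * c :=
      (log_lt_sub_one_of_pos (by positivity) (by simp [ha.ne', hω.ne', hc0.ne'])).trans_eq (by ring)
    rw [div_mul_cancel₀ _ hω.ne'] at htele
    rw [hmin]
    calc ω / a * log (1 + a) - c = ω / a * (log (1 + a) - a / ω * c) := by field_simp
      _ < ω / a * (log (1 + a) - log (1 + a / ω * c)) := by gcongr
      _ ≤ ω / a * (a / ω * ∑ r ∈ Ico c ω, (1 + a / ω * r)⁻¹) := by gcongr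
      _ = _ := by rw [← mul_assoc, div_mul_div_cancel₀ ha.ne', div_self hω.ne', one_mul]
  have htail : ∑ r ∈ Ico ω (c + ω), (1 + a / ω * (min r ω : ℕ))⁻¹ = c / (1 + a) := by
    rw [sum_congr rfl fun r hr => by rw [min_eq_right (mem_Ico.1 hr).1, div_mul_cancel₀ _ hω.ne'],
      sum_const, Nat.card_Ico, Nat.add_sub_cancel, nsmul_eq_mul, div_eq_mul_inv]
  rw [htail]
  have : (c : ℝ) * a / (1 + a) = c - c / (1 + a) := by field_simp; ring
  linarith

section StateEvolution

variable (σ2 P R : ℝ) {ω Λ : ℕ}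

lemma phiSE_one (hωΛ : ω ≤ Λ) (r : ℕ) :
    phiSE σ2 P ω Λ (fun _ => 1) r = σ2 * (1 + ((Λ : ℝ) + ω - 1) / Λ * (P / σ2) / ω *
      (min (min r ω) (Λ + ω - r) : ℕ)) := by
  rw [phiSE, sum_const, nsmul_eq_mul, mul_one, Nat.card_Icc]
  congr 5
  omega

lemma phiSE_one_of_le (hωΛ : ω ≤ Λ) {r : ℕ} (hr : r ≤ Λ) :
    phiSE σ2 P ω Λ (fun _ => 1) r =
      σ2 * (1 + ((Λ : ℝ) + ω - 1) / Λ * (P / σ2) / ω * (min r ω : ℕ)) := by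
  rw [phiSE_one σ2 P hωΛ, show min (min r ω) (Λ + ω - r) = min r ω by omega]

lemma phiSE_one_reflect (hωΛ : ω ≤ Λ) {r : ℕ} (hr : r ≤ Λ + ω) :
    phiSE σ2 P ω Λ (fun _ => 1) (Λ + ω - r) = phiSE σ2 P ω Λ (fun _ => 1) r := by
  rw [phiSE_one σ2 P hωΛ, phiSE_one σ2 P hωΛ,
    show min (min (Λ + ω - r) ω) (Λ + ω - (Λ + ω - r)) = min (min r ω) (Λ + ω - r) by omega]

lemma psiSE_one_eq_zero_iff (c : ℕ) :
    psiSE σ2 P R ω Λ 1 c = 0 ↔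
      2 * R < P / ω * ∑ r ∈ Icc c (c + ω - 1), (phiSE σ2 P ω Λ (fun _ => 1) r)⁻¹ := by
  dsimp only [psiSE]
  split_ifs with h <;> simp [h]

lemma psiSE_one_reflect_eq_zero_iff (hωΛ : ω ≤ Λ) {c : ℕ} (hc1 : 1 ≤ c) (hcΛ : c ≤ Λ) :
    psiSE σ2 P R ω Λ 1 (Λ + 1 - c) = 0 ↔ psiSE σ2 P R ω Λ 1 c = 0 := by
  have hsum : ∑ r ∈ Icc (Λ + 1 - c) (Λ + 1 - c + ω - 1), (phiSE σ2 P ω Λ (fun _ => 1) r)⁻¹ =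
      ∑ r ∈ Icc c (c + ω - 1), (phiSE σ2 P ω Λ (fun _ => 1) r)⁻¹ := by
    refine sum_nbij' (fun r => Λ + ω - r) (fun r => Λ + ω - r) ?_ ?_ ?_ ?_ ?_ <;>
      intro r hr <;> simp only [mem_Icc] at hr ⊢
    iterate 4 omega
    rw [phiSE_one_reflect σ2 P hωΛ (by omega)]
  rw [psiSE_one_eq_zero_iff, psiSE_one_eq_zero_iff, hsum]

lemma psiSE_one_eq_zero_of_le {snr κ : ℝ} (hσ2 : 0 < σ2) (hP : 0 < P) (hsnr : snr = P / σ2)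
    (hκ : κ = ((Λ : ℝ) + ω - 1) / Λ) {c : ℕ} (hc1 : 1 ≤ c) (hcω : c ≤ ω - 1) (hcΛ : c + ω ≤ Λ + 1)
    (hc : (c : ℝ) ≤ ω * ((1 + κ * snr) / (κ * snr) ^ 2) * (log (1 + κ * snr) - 2 * R * κ)) :
    psiSE σ2 P R ω Λ 1 c = 0 := by
  have hω : (1 : ℝ) ≤ ω := by exact_mod_cast (show 1 ≤ ω by omega)
  have hΛ : (1 : ℝ) ≤ Λ := by exact_mod_cast (show 1 ≤ Λ by omega)
  have hκ0 : 0 < κ := hκ ▸ div_pos (by linarith) (by linarith)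
  have hsnr0 : 0 < snr := hsnr ▸ div_pos hP hσ2
  have ha : 0 < κ * snr := mul_pos hκ0 hsnr0
  have hsum : P / ω * ∑ r ∈ Icc c (c + ω - 1), (phiSE σ2 P ω Λ (fun _ => 1) r)⁻¹ =
      snr / ω * ∑ r ∈ Ico c (c + ω), (1 + κ * snr / ω * (min r ω : ℕ))⁻¹ := by
    rw [← Ico_add_one_right_eq_Icc, show c + ω - 1 + 1 = c + ω by omega, mul_sum, mul_sum]
    refine sum_congr rfl fun r hr => ?_
    rw [phiSE_one_of_le σ2 P (by omega) (by simp only [mem_Ico] at hr; omega), hsnr, hκ]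
    field_simp
  have hmargin : 2 * R ≤
      snr / ω * (ω / (κ * snr) * log (1 + κ * snr) - c * (κ * snr) / (1 + κ * snr)) :=
    calc 2 * R ≤ 2 * R + (κ * snr) ^ 2 / (κ * ω * (1 + κ * snr)) *
          (ω * ((1 + κ * snr) / (κ * snr) ^ 2) * (log (1 + κ * snr) - 2 * R * κ) - c) :=
        le_add_of_nonneg_right (mul_nonneg (by positivity) (sub_nonneg.2 hc))
      _ = _ := by field_simp; ring
  rw [psiSE_one_eq_zero_iff, hsum]
  calc 2 * R ≤ _ := hmargin
    _ < _ := by gcongr; exact lt_sum_inv_one_add_div_mul_min ha hc1 (by omega)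

end StateEvolution

theorem stmt_3_general (σ2 P R snr κ : ℝ) (ω Λ cstar : ℕ)
    (hσ2 : 0 < σ2) (hP : 0 < P)
    (hΛ : 2 * ω - 1 ≤ Λ)
    (hsnr : snr = P / σ2) (hκ : κ = ((Λ : ℝ) + ω - 1) / Λ)
    (hcstar : cstar =
      min (ω - 1)
        (⌊(ω : ℝ) * ((1 + κ * snr) / (κ * snr) ^ 2) *
            (Real.log (1 + κ * snr) - 2 * R * κ)⌋.toNat)) :
    ∀ c ∈ Finset.Icc 1 cstar ∪ Finset.Icc (Λ - cstar + 1) Λ,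
      psiSE σ2 P R ω Λ 1 c = 0 := by
  have lower : ∀ c, 1 ≤ c → c ≤ cstar → psiSE σ2 P R ω Λ 1 c = 0 := by
    intro c hc1 hc
    rw [hcstar, le_min_iff, Int.floor_toNat, Nat.le_floor_iff' (by omega)] at hc
    exact psiSE_one_eq_zero_of_le σ2 P R hσ2 hP hsnr hκ hc1 hc.1 (by omega) hc.2
  intro c hc
  rcases mem_union.1 hc with hc | hc <;> rw [mem_Icc] at hc
  · exact lower c hc.1 hc.2
  · have hcs : cstar ≤ ω - 1 := hcstar ▸ min_le_left _ _
    rw [show c = Λ + 1 - (Λ + 1 - c) by omega,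
      psiSE_one_reflect_eq_zero_iff σ2 P R (by omega) (by omega) (by omega)]
    exact lower (Λ + 1 - c) (by omega) (by omega)

theorem stmt_3 (σ2 P R snr κ : ℝ) (ω Λ cstar : ℕ)
    (hσ2 : 0 < σ2) (hP : 0 < P) (hR : 0 < R)
    (hω : 1 ≤ ω) (hΛ : 2 * ω - 1 ≤ Λ)
    (hsnr : snr = P / σ2) (hκ : κ = ((Λ : ℝ) + ω - 1) / Λ)
    (hRcap : R < 1 / (2 * κ) * Real.log (1 + κ * snr))
    (hωbig : (1 / (Real.exp (2 * R * κ) - 1) - 1 / (κ * snr))⁻¹ < (ω : ℝ))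
    (hcstar : cstar =
      min (ω - 1)
        (⌊(ω : ℝ) * ((1 + κ * snr) / (κ * snr) ^ 2) *
            (Real.log (1 + κ * snr) - 2 * R * κ)⌋.toNat)) :
    ∀ c ∈ Finset.Icc 1 cstar ∪ Finset.Icc (Λ - cstar + 1) Λ,
      psiSE σ2 P R ω Λ 1 c = 0 :=
  stmt_3_general σ2 P R snr κ ω Λ cstar hσ2 hP hΛ hsnr hκ hcstar
end

section
/- Assume R < (1/(2κ)) ln(1 + κ·snr) and ω > ( 1/(e^{2Rκ} − 1) − 1/(κ·snr) )^{−1}, and let c* = min{ ω−1, ⌊ ω·((1 + κ·snr)/(κ·snr)²)·( ln(1 + κ·snr) − 2Rκ ) ⌋ }, and suppose c* ≥ 1. Then in the asymptotic state-evolution recursion for the (ω,Λ) base matrix, for every iteration t ≥ 1 one has ψ̄_c^t = 0 for all c ∈ {1,…, min(t·c*, Λ)} ∪ {Λ − min(t·c*, Λ) + 1, …, Λ}. Consequently ψ̄_c^T = 0 for all c ∈ {1,…,Λ} with T = ⌈ Λ/(2c*) ⌉, i.e., the decoder fully decodes in at most ⌈ Λ/(2c*) ⌉ iterations. -/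
/-! Every `ψ_c^t` is `0` or `1`. If sections `1, …, a` are decoded at iteration `t` and
`c ≤ a + c*`, then row `c + i` (`i < ω`) sees at most `c* + i` undecoded sections, so
`φ_{c+i} ≤ σ²(1 + β(c* + i))` with `β = κ·snr/ω`. Telescoping `log(1 + t) < t` gives
`(P/ω) Σ_r 1/φ_r > (log(1 + β(c* + ω)) - log(1 + βc*)) / κ`, and the choice of `c*` (through
`log y ≤ y - 1`) makes this log gain at least `2Rκ`, so section `c` is decoded at iteration `t + 1`.
Decoding thus advances by `c*` sections per iteration from the left end, and by the reflection
symmetry `c ↦ Λ + 1 - c` of the recursion also from the right end. -/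

open Finset Real

lemma log_one_add_mul_succ_sub_div_lt {β y : ℝ} (hβ : 0 < β) (hy : 0 ≤ y) :
    (log (1 + β * (y + 1)) - log (1 + β * y)) / β < (1 + β * y)⁻¹ := by
  have hpos : 0 < 1 + β * y := by positivity
  rw [← log_div (by positivity) hpos.ne', div_lt_iff₀ hβ]
  calc log ((1 + β * (y + 1)) / (1 + β * y)) < (1 + β * (y + 1)) / (1 + β * y) - 1 :=
        log_lt_sub_one_of_pos (by positivity) ((one_lt_div hpos).mpr (by linarith)).ne'
    _ = (1 + β * y)⁻¹ * β := by field_simp; ring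

lemma log_one_add_sub_log_one_add_div_lt_sum_inv {β a : ℝ} (hβ : 0 < β) (ha : 0 ≤ a) {n : ℕ}
    (hn : n ≠ 0) :
    (log (1 + β * (a + n)) - log (1 + β * a)) / β < ∑ i ∈ range n, (1 + β * (a + i))⁻¹ := by
  have htel := sum_range_sub (fun i : ℕ => log (1 + β * (a + i))) n
  simp only [Nat.cast_zero, add_zero] at htel
  rw [← htel, sum_div]
  refine sum_lt_sum_of_nonempty (nonempty_range_iff.mpr hn) fun i _ => ?_
  simpa [add_assoc] using log_one_add_mul_succ_sub_div_lt hβ (by positivity : 0 ≤ a + i)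

lemma le_log_one_add_sub_log_one_add {x ω c d : ℝ} (hx : 0 < x) (hω : 0 < ω) (hc : 0 ≤ c)
    (hcd : c ≤ ω * ((1 + x) / x ^ 2) * (log (1 + x) - d)) :
    d ≤ log (1 + x / ω * (c + ω)) - log (1 + x / ω * c) := by
  set u := x / ω * c with hu
  have hu0 : 0 ≤ u := by positivity
  have hsplit : 1 + x / ω * (c + ω) = 1 + u + x := by
    rw [hu]
    field_simp
    ring
  have hux : u * x / (1 + x) ≤ log (1 + x) - d := by
    rw [div_le_iff₀ (by positivity)]
    calc u * x = x ^ 2 / ω * c := by rw [hu]; ring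
      _ ≤ x ^ 2 / ω * (ω * ((1 + x) / x ^ 2) * (log (1 + x) - d)) := by gcongr
      _ = (log (1 + x) - d) * (1 + x) := by field_simp
  have hlog : log ((1 + x) * (1 + u) / (1 + u + x)) ≤ u * x / (1 + x) :=
    calc log ((1 + x) * (1 + u) / (1 + u + x))
        ≤ (1 + x) * (1 + u) / (1 + u + x) - 1 := log_le_sub_one_of_pos (by positivity)
      _ = u * x / (1 + u + x) := by field_simp; ring
      _ ≤ u * x / (1 + x) := by gcongr; linarith
  rw [log_div (by positivity) (by positivity), log_mul (by positivity) (by positivity)] at hlog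
  rw [hsplit]
  linarith

lemma sum_Icc_le_sub_of_eq_zero {f : ℕ → ℝ} {a L U : ℕ} (hf : ∀ c ∈ Icc L U, f c ≤ 1)
    (hzero : ∀ c ∈ Icc L U, c ≤ a → f c = 0) : ∑ c ∈ Icc L U, f c ≤ (U - a : ℕ) := by
  calc ∑ c ∈ Icc L U, f c = ∑ c ∈ Icc L U with a < c, f c :=
        (sum_filter_of_ne fun c hc hfc => not_le.mp fun h => hfc (hzero c hc h)).symm
    _ ≤ #{c ∈ Icc L U | a < c} • (1 : ℝ) :=
        sum_le_card_nsmul _ _ _ fun c hc => hf c (mem_filter.mp hc).1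
    _ ≤ #(Icc (a + 1) U) := by
        rw [nsmul_one]
        gcongr
        intro c hc
        simp only [mem_filter, mem_Icc] at hc ⊢
        omega
    _ = (U - a : ℕ) := by simp

noncomputable def phiSECoeff (σ2 P : ℝ) (ω Λ : ℕ) : ℝ := ((Λ : ℝ) + ω - 1) / Λ * (P / σ2) / ω

lemma phiSECoeff_pos {σ2 P : ℝ} {ω Λ : ℕ} (hσ2 : 0 < σ2) (hP : 0 < P) (hω : 1 ≤ ω)
    (hΛ : 1 ≤ Λ) : 0 < phiSECoeff σ2 P ω Λ := by
  have hω' : (1 : ℝ) ≤ ω := by exact_mod_cast hω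
  have hΛ' : (1 : ℝ) ≤ Λ := by exact_mod_cast hΛ
  unfold phiSECoeff
  have : 0 < (Λ : ℝ) + ω - 1 := by linarith
  positivity

section StateEvolution

variable {σ2 P R : ℝ} {ω Λ : ℕ}

lemma phiSE_eq (ψ : ℕ → ℝ) (r : ℕ) : phiSE σ2 P ω Λ ψ r =
    σ2 * (1 + phiSECoeff σ2 P ω Λ * ∑ c ∈ Icc (max 1 (r + 1 - ω)) (min r Λ), ψ c) :=
  rfl

lemma phiSE_pos {ψ : ℕ → ℝ} (hσ2 : 0 < σ2) (hβ : 0 ≤ phiSECoeff σ2 P ω Λ)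
    (hψ : ∀ c, 0 ≤ ψ c) (r : ℕ) : 0 < phiSE σ2 P ω Λ ψ r := by
  have : 0 ≤ phiSECoeff σ2 P ω Λ * ∑ c ∈ Icc (max 1 (r + 1 - ω)) (min r Λ), ψ c :=
    mul_nonneg hβ (sum_nonneg fun c _ => hψ c)
  rw [phiSE_eq]
  exact mul_pos hσ2 (by linarith)

lemma phiSE_le {ψ : ℕ → ℝ} {a : ℕ} (hσ2 : 0 ≤ σ2) (hβ : 0 ≤ phiSECoeff σ2 P ω Λ)
    (hψ : ∀ c, ψ c ≤ 1) (hzero : ∀ c, 1 ≤ c → c ≤ a → ψ c = 0) (r : ℕ) :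
    phiSE σ2 P ω Λ ψ r ≤ σ2 * (1 + phiSECoeff σ2 P ω Λ * (r - a : ℕ)) := by
  have hsum : ∑ c ∈ Icc (max 1 (r + 1 - ω)) (min r Λ), ψ c ≤ (r - a : ℕ) :=
    calc ∑ c ∈ Icc (max 1 (r + 1 - ω)) (min r Λ), ψ c ≤ (min r Λ - a : ℕ) :=
          sum_Icc_le_sub_of_eq_zero (fun c _ => hψ c)
            fun c hc => hzero c (le_trans (le_max_left _ _) (mem_Icc.mp hc).1)
      _ ≤ (r - a : ℕ) := by gcongr; exact min_le_left r Λ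
  rw [phiSE_eq]
  gcongr

lemma phiSE_reflect {ψ : ℕ → ℝ} (hψ : ∀ c ∈ Icc 1 Λ, ψ (Λ + 1 - c) = ψ c) {r : ℕ}
    (hr : r ∈ Icc 1 (Λ + ω - 1)) : phiSE σ2 P ω Λ ψ (Λ + ω - r) = phiSE σ2 P ω Λ ψ r := by
  rw [mem_Icc] at hr
  unfold phiSE
  congr 3
  refine sum_nbij' (fun c => Λ + 1 - c) (fun c => Λ + 1 - c) ?_ ?_ ?_ ?_ ?_ <;>
    intro c hc <;> rw [mem_Icc] at hc
  any_goals rw [mem_Icc]; omega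
  any_goals omega
  exact (hψ c (mem_Icc.mpr (by omega))).symm

lemma psiSE_mem_Icc (t c : ℕ) : psiSE σ2 P R ω Λ t c ∈ Set.Icc 0 1 := by
  cases t with
  | zero => simp [psiSE]
  | succ t =>
    simp only [psiSE]
    split_ifs <;> norm_num

lemma psiSE_succ_eq_zero_iff (t c : ℕ) :
    psiSE σ2 P R ω Λ (t + 1) c = 0 ↔
      2 * R < P / ω * ∑ r ∈ Icc c (c + ω - 1), (phiSE σ2 P ω Λ (psiSE σ2 P R ω Λ t) r)⁻¹ := by
  simp only [psiSE]
  split_ifs with h <;> simp [h]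

lemma psiSE_reflect (t : ℕ) :
    ∀ c ∈ Icc 1 Λ, psiSE σ2 P R ω Λ t (Λ + 1 - c) = psiSE σ2 P R ω Λ t c := by
  induction t with
  | zero => exact fun _ _ => rfl
  | succ t ih =>
    intro c hc
    rw [mem_Icc] at hc
    have hsum : ∑ r ∈ Icc (Λ + 1 - c) (Λ + 1 - c + ω - 1),
          (phiSE σ2 P ω Λ (psiSE σ2 P R ω Λ t) r)⁻¹ =
        ∑ r ∈ Icc c (c + ω - 1), (phiSE σ2 P ω Λ (psiSE σ2 P R ω Λ t) r)⁻¹ := by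
      refine sum_nbij' (fun r => Λ + ω - r) (fun r => Λ + ω - r) ?_ ?_ ?_ ?_ ?_ <;>
        intro r hr <;> rw [mem_Icc] at hr
      any_goals rw [mem_Icc]; omega
      any_goals omega
      rw [phiSE_reflect ih (mem_Icc.mpr (by omega))]
    simp only [psiSE, hsum]

lemma psiSE_succ_eq_zero_of_le_add {cstar a t c : ℕ} (hσ2 : 0 < σ2) (hP : 0 < P)
    (hω : 1 ≤ ω) (hΛ : 1 ≤ Λ)
    (hgain : 2 * R * (((Λ : ℝ) + ω - 1) / Λ) ≤
      log (1 + phiSECoeff σ2 P ω Λ * (cstar + ω)) - log (1 + phiSECoeff σ2 P ω Λ * cstar))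
    (hzero : ∀ c, 1 ≤ c → c ≤ a → psiSE σ2 P R ω Λ t c = 0) (hc : c ≤ a + cstar) :
    psiSE σ2 P R ω Λ (t + 1) c = 0 := by
  set β := phiSECoeff σ2 P ω Λ with hβ_def
  have hβ : 0 < β := phiSECoeff_pos hσ2 hP hω hΛ
  have hwindow : ∑ i ∈ range ω, (σ2 * (1 + β * (cstar + i)))⁻¹ ≤
      ∑ r ∈ Icc c (c + ω - 1), (phiSE σ2 P ω Λ (psiSE σ2 P R ω Λ t) r)⁻¹ := by
    rw [show Icc c (c + ω - 1) = Ico c (c + ω) by ext; simp; omega, sum_Ico_eq_sum_range,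
      add_tsub_cancel_left]
    gcongr with i
    · exact phiSE_pos hσ2 hβ.le (fun c => (psiSE_mem_Icc t c).1) _
    -- sections `≤ a` are decoded and `c ≤ a + cstar`, so row `c + i` sees at most `cstar + i`
    -- undecoded sections
    calc phiSE σ2 P ω Λ (psiSE σ2 P R ω Λ t) (c + i) ≤ σ2 * (1 + β * (c + i - a : ℕ)) :=
          phiSE_le hσ2.le hβ.le (fun c => (psiSE_mem_Icc t c).2) hzero _
      _ ≤ σ2 * (1 + β * (cstar + i)) := by
          gcongr
          exact_mod_cast (by omega : c + i - a ≤ cstar + i)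
  rw [psiSE_succ_eq_zero_iff]
  calc 2 * R = P / ω * (σ2⁻¹ * (2 * R * (((Λ : ℝ) + ω - 1) / Λ) / β)) := by
        have hω' : (1 : ℝ) ≤ ω := by exact_mod_cast hω
        have hΛ' : (1 : ℝ) ≤ Λ := by exact_mod_cast hΛ
        have : (Λ : ℝ) + ω - 1 ≠ 0 := by linarith
        rw [hβ_def, phiSECoeff]
        field_simp
    _ ≤ P / ω * (σ2⁻¹ * ((log (1 + β * (cstar + ω)) - log (1 + β * cstar)) / β)) := by
        gcongr
    _ < P / ω * (σ2⁻¹ * ∑ i ∈ range ω, (1 + β * (cstar + i))⁻¹) := by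
        gcongr
        exact log_one_add_sub_log_one_add_div_lt_sum_inv hβ (Nat.cast_nonneg cstar) (by omega)
    _ = P / ω * ∑ i ∈ range ω, (σ2 * (1 + β * (cstar + i)))⁻¹ := by
        simp only [mul_sum, mul_inv]
    _ ≤ _ := by gcongr

lemma psiSE_eq_zero_of_le_mul {cstar : ℕ} (hσ2 : 0 < σ2) (hP : 0 < P) (hω : 1 ≤ ω) (hΛ : 1 ≤ Λ)
    (hgain : 2 * R * (((Λ : ℝ) + ω - 1) / Λ) ≤
      log (1 + phiSECoeff σ2 P ω Λ * (cstar + ω)) - log (1 + phiSECoeff σ2 P ω Λ * cstar)) :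
    ∀ t c, 1 ≤ c → c ≤ t * cstar → psiSE σ2 P R ω Λ t c = 0
  | 0, _, hc1, hc => by omega
  | t + 1, c, _, hc =>
    psiSE_succ_eq_zero_of_le_add hσ2 hP hω hΛ hgain
      (psiSE_eq_zero_of_le_mul hσ2 hP hω hΛ hgain t) (by rwa [add_one_mul] at hc)

end StateEvolution

theorem stmt_4_general (σ2 P R snr κ : ℝ) (ω Λ cstar : ℕ)
    (hσ2 : 0 < σ2) (hP : 0 < P)
    (hω : 1 ≤ ω) (hΛ : 2 * ω - 1 ≤ Λ)
    (hsnr : snr = P / σ2) (hκ : κ = ((Λ : ℝ) + ω - 1) / Λ)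
    (hcstar : cstar =
      min (ω - 1)
        (⌊(ω : ℝ) * ((1 + κ * snr) / (κ * snr) ^ 2) *
            (Real.log (1 + κ * snr) - 2 * R * κ)⌋.toNat))
    (hcstar1 : 1 ≤ cstar) :
    (∀ t : ℕ, 1 ≤ t →
      ∀ c ∈ Finset.Icc 1 (min (t * cstar) Λ) ∪
            Finset.Icc (Λ - min (t * cstar) Λ + 1) Λ,
        psiSE σ2 P R ω Λ t c = 0) ∧
    (∀ c ∈ Finset.Icc 1 Λ,
      psiSE σ2 P R ω Λ (⌈(Λ : ℝ) / (2 * cstar)⌉₊) c = 0) := by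
  subst hsnr hκ
  have hΛ1 : 1 ≤ Λ := by omega
  have hω' : (0 : ℝ) < ω := by exact_mod_cast hω
  set κ := ((Λ : ℝ) + ω - 1) / Λ
  set x := κ * (P / σ2)
  set V := (ω : ℝ) * ((1 + x) / x ^ 2) * (log (1 + x) - 2 * R * κ)
  have hx : 0 < x := by
    have := mul_pos (phiSECoeff_pos hσ2 hP hω hΛ1) hω'
    rwa [phiSECoeff, div_mul_cancel₀ _ hω'.ne'] at this
  have hcstar_le : (cstar : ℝ) ≤ V := by
    have : (cstar : ℤ) ≤ ⌊V⌋ := by omega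
    exact_mod_cast Int.le_floor.mp this
  have hzero := psiSE_eq_zero_of_le_mul (R := R) hσ2 hP hω hΛ1
    (le_log_one_add_sub_log_one_add hx hω' (Nat.cast_nonneg cstar) hcstar_le)
  have hdecoded : ∀ t, ∀ c ∈ Icc 1 Λ, c ≤ t * cstar ∨ Λ + 1 - c ≤ t * cstar →
      psiSE σ2 P R ω Λ t c = 0 := by
    rintro t c hc (h | h)
    · exact hzero t c (mem_Icc.mp hc).1 h
    · rw [← psiSE_reflect t c hc]
      exact hzero t _ (by rw [mem_Icc] at hc; omega) h
  refine ⟨fun t _ c hc => hdecoded t c ?_ ?_, fun c hc => hdecoded _ c hc ?_⟩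
  · simp only [mem_union, mem_Icc] at hc ⊢
    omega
  · simp only [mem_union, mem_Icc] at hc
    omega
  · set T := ⌈(Λ : ℝ) / (2 * cstar)⌉₊
    have hT : (Λ : ℝ) ≤ T * cstar + T * cstar := by
      have : (Λ : ℝ) / (2 * cstar) ≤ T := Nat.le_ceil _
      rw [div_le_iff₀ (by positivity)] at this
      linarith
    have hT' : Λ ≤ T * cstar + T * cstar := by exact_mod_cast hT
    rw [mem_Icc] at hc
    omega

theorem stmt_4 (σ2 P R snr κ : ℝ) (ω Λ cstar : ℕ)
    (hσ2 : 0 < σ2) (hP : 0 < P) (hR : 0 < R)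
    (hω : 1 ≤ ω) (hΛ : 2 * ω - 1 ≤ Λ)
    (hsnr : snr = P / σ2) (hκ : κ = ((Λ : ℝ) + ω - 1) / Λ)
    (hRcap : R < 1 / (2 * κ) * Real.log (1 + κ * snr))
    (hωbig : (1 / (Real.exp (2 * R * κ) - 1) - 1 / (κ * snr))⁻¹ < (ω : ℝ))
    (hcstar : cstar =
      min (ω - 1)
        (⌊(ω : ℝ) * ((1 + κ * snr) / (κ * snr) ^ 2) *
            (Real.log (1 + κ * snr) - 2 * R * κ)⌋.toNat))
    (hcstar1 : 1 ≤ cstar) :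
    (∀ t : ℕ, 1 ≤ t →
      ∀ c ∈ Finset.Icc 1 (min (t * cstar) Λ) ∪
            Finset.Icc (Λ - min (t * cstar) Λ + 1) Λ,
        psiSE σ2 P R ω Λ t c = 0) ∧
    (∀ c ∈ Finset.Icc 1 Λ,
      psiSE σ2 P R ω Λ (⌈(Λ : ℝ) / (2 * cstar)⌉₊) c = 0) :=
  stmt_4_general σ2 P R snr κ ω Λ cstar hσ2 hP hω hΛ hsnr hκ hcstar hcstar1
end

section
/- Let L ≥ 1 and M ≥ 1 be integers and let β ∈ ℝ^{ML} have, in each of its L sections sec(ℓ) = {(ℓ−1)M+1,…,ℓM}, exactly one entry equal to 1 and the rest 0. Let s ∈ ℝ^{ML} be arbitrary, and let β̂ be the section-wise hard decision of s (in each section, a 1 at an index attaining the maximum of s over that section, 0 elsewhere). Then the section error rate satisfies (1/L) Σ_{ℓ=1}^{L} 1{ β̂_{sec(ℓ)} ≠ β_{sec(ℓ)} } ≤ (4/L) ‖s − β‖₂². -/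
/-!
In a wrongly decoded section the maximiser `j` of `s` differs from the true position `k`, so the
squared error in that section is at least `(s k - 1)² + (s j)²` with `s k ≤ s j`; this is at least
`1/2`, attained at `s k = s j = 1/2`. Summing over sections gives the bound, even with `2` in place
of `4`.
-/

open Finset

lemma half_le_sub_one_sq_add_sq {a b : ℝ} (hab : a ≤ b) : 1 / 2 ≤ (a - 1) ^ 2 + b ^ 2 := by
  nlinarith [sq_nonneg (a + b - 1), sq_nonneg (b - a)]

section OneHot

variable {ι : Type*} [Fintype ι] [DecidableEq ι]

lemma sub_one_sq_add_sq_le_sum_sq_sub_single (s : ι → ℝ) {j k : ι} (hjk : j ≠ k) :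
    (s k - 1) ^ 2 + s j ^ 2 ≤ ∑ i, (s i - (Pi.single k 1 : ι → ℝ) i) ^ 2 := by
  have hpair := sum_le_sum_of_subset_of_nonneg (subset_univ {k, j})
    fun i _ _ => sq_nonneg (s i - (Pi.single k 1 : ι → ℝ) i)
  rwa [sum_pair hjk.symm, Pi.single_eq_same, Pi.single_eq_of_ne hjk, sub_zero] at hpair

lemma ite_single_ne_le_two_mul_sum_sq (s : ι → ℝ) {j : ι} (hj : ∀ i, s i ≤ s j) (k : ι) :
    (if (Pi.single j 1 : ι → ℝ) ≠ Pi.single k 1 then (1 : ℝ) else 0) ≤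
      2 * ∑ i, (s i - (Pi.single k 1 : ι → ℝ) i) ^ 2 := by
  split_ifs with hne
  · have hjk : j ≠ k := fun h => hne (h ▸ rfl)
    have := half_le_sub_one_sq_add_sq (hj k)
    linarith [sub_one_sq_add_sq_le_sum_sq_sub_single s hjk]
  · positivity

end OneHot

theorem stmt_9_general (L M : ℕ)
    (β s βhat : Fin L → Fin M → ℝ)
    (ind : Fin L → Fin M)
    (hβ : ∀ ℓ, β ℓ = fun i => if i = ind ℓ then (1 : ℝ) else 0)
    (sel : Fin L → Fin M) (hsel : ∀ ℓ j, s ℓ j ≤ s ℓ (sel ℓ))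
    (hβhat : ∀ ℓ, βhat ℓ = fun i => if i = sel ℓ then (1 : ℝ) else 0) :
    (1 / L : ℝ) * ∑ ℓ, (if βhat ℓ ≠ β ℓ then (1 : ℝ) else 0) ≤
      (4 / L : ℝ) * ∑ ℓ, ∑ i, (s ℓ i - β ℓ i) ^ 2 := by
  have hβ' : ∀ ℓ, β ℓ = Pi.single (ind ℓ) 1 := fun ℓ => by
    ext i; rw [hβ, Pi.single_apply]
  have hβhat' : ∀ ℓ, βhat ℓ = Pi.single (sel ℓ) 1 := fun ℓ => by
    ext i; rw [hβhat, Pi.single_apply]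
  have hsections : ∑ ℓ, (if βhat ℓ ≠ β ℓ then (1 : ℝ) else 0) ≤
      2 * ∑ ℓ, ∑ i, (s ℓ i - β ℓ i) ^ 2 := by
    rw [mul_sum]
    refine sum_le_sum fun ℓ _ => ?_
    simpa only [hβ', hβhat'] using ite_single_ne_le_two_mul_sum_sq (s ℓ) (hsel ℓ) (ind ℓ)
  have herr : 0 ≤ ∑ ℓ, ∑ i, (s ℓ i - β ℓ i) ^ 2 := by positivity
  calc (1 / L : ℝ) * ∑ ℓ, (if βhat ℓ ≠ β ℓ then (1 : ℝ) else 0)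
      ≤ (1 / L : ℝ) * (2 * ∑ ℓ, ∑ i, (s ℓ i - β ℓ i) ^ 2) := by gcongr
    _ ≤ (4 / L : ℝ) * ∑ ℓ, ∑ i, (s ℓ i - β ℓ i) ^ 2 := by
      rw [← mul_assoc, div_mul_eq_mul_div, one_mul]
      gcongr
      norm_num

theorem stmt_9 (L M : ℕ) (hL : 1 ≤ L) (hM : 1 ≤ M)
    (β s βhat : Fin L → Fin M → ℝ)
    (ind : Fin L → Fin M)
    (hβ : ∀ ℓ, β ℓ = fun i => if i = ind ℓ then (1 : ℝ) else 0)
    (sel : Fin L → Fin M) (hsel : ∀ ℓ j, s ℓ j ≤ s ℓ (sel ℓ))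
    (hβhat : ∀ ℓ, βhat ℓ = fun i => if i = sel ℓ then (1 : ℝ) else 0) :
    (1 / L : ℝ) * ∑ ℓ, (if βhat ℓ ≠ β ℓ then (1 : ℝ) else 0) ≤
      (4 / L : ℝ) * ∑ ℓ, ∑ i, (s ℓ i - β ℓ i) ^ 2 :=
  stmt_9_general L M β s βhat ind hβ sel hsel hβhat
end

section
/- Fix snr > 0, κ ≥ 1, and integers ω ≥ 2 and c with 1 ≤ c ≤ ω−1, and define F_c = (κ·snr/ω) · [ Σ_{r=c}^{ω−1} 1/(1 + (κ·snr/ω)·r) + c/(1 + κ·snr) ]. Then F_c > ln(1 + κ·snr) − (c/ω) · (κ·snr)²/(1 + κ·snr). -/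
/-!
With `h = κ·snr/ω`, telescope `log (1 + κ·snr) = ∑_{r<ω} (log (1 + (r+1)h) - log (1 + rh))` and bound
each increment strictly by `h/(1 + rh)` (from `log x < x - 1`). The first `c` terms are at most `h`
each, and `c·h` is exactly `(c/ω)(κ·snr)²/(1+κ·snr) + h·c/(1+κ·snr)`.
-/

open Finset Real

lemma Real.log_add_sub_log_lt {a h : ℝ} (ha : 0 < a) (hh : 0 < h) :
    log (a + h) - log a < h / a := by
  have hpos : 0 < (a + h) / a := by positivity
  have hne : (a + h) / a ≠ 1 := by
    rw [ne_eq, div_eq_one_iff_eq ha.ne']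
    linarith
  calc log (a + h) - log a = log ((a + h) / a) := (log_div (by positivity) ha.ne').symm
    _ < (a + h) / a - 1 := log_lt_sub_one_of_pos hpos hne
    _ = h / a := by field_simp; ring

lemma Real.log_one_add_natCast_mul_lt_sum {h : ℝ} (hh : 0 < h) {n : ℕ} (hn : 0 < n) :
    log (1 + n * h) < ∑ r ∈ range n, h / (1 + r * h) := by
  have htelescope :
      log (1 + n * h) = ∑ r ∈ range n, (log (1 + (r + 1 : ℕ) * h) - log (1 + r * h)) := by
    rw [sum_range_sub (fun r : ℕ => log (1 + r * h))]
    simp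
  rw [htelescope]
  refine sum_lt_sum_of_nonempty (nonempty_range_iff.mpr hn.ne') fun r _ => ?_
  calc log (1 + (r + 1 : ℕ) * h) - log (1 + r * h) = log (1 + r * h + h) - log (1 + r * h) := by
        push_cast; ring_nf
    _ < h / (1 + r * h) := log_add_sub_log_lt (by positivity) hh

lemma Real.log_one_add_natCast_mul_lt_mul_add_sum_Ico {h : ℝ} (hh : 0 < h) {n c : ℕ} (hn : 0 < n)
    (hc : c ≤ n) :
    log (1 + n * h) < c * h + ∑ r ∈ Ico c n, h / (1 + r * h) := by
  have hhead : ∑ r ∈ range c, h / (1 + r * h) ≤ c * h := by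
    calc ∑ r ∈ range c, h / (1 + r * h) ≤ ∑ _r ∈ range c, h :=
          sum_le_sum fun r _ => div_le_self hh.le (le_add_of_nonneg_right (by positivity))
      _ = c * h := by rw [sum_const, card_range, nsmul_eq_mul]
  calc log (1 + n * h) < ∑ r ∈ range n, h / (1 + r * h) := log_one_add_natCast_mul_lt_sum hh hn
    _ = ∑ r ∈ range c, h / (1 + r * h) + ∑ r ∈ Ico c n, h / (1 + r * h) :=
          (sum_range_add_sum_Ico _ hc).symm
    _ ≤ c * h + ∑ r ∈ Ico c n, h / (1 + r * h) := by gcongr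

theorem stmt_12_general (snr κ : ℝ) (hsnr : 0 < snr) (hκ : 1 ≤ κ)
    (ω c : ℕ) (hω : 2 ≤ ω) (hc2 : c ≤ ω - 1) :
    Real.log (1 + κ * snr) - (c : ℝ) / ω * (κ * snr) ^ 2 / (1 + κ * snr) <
      κ * snr / ω *
        ((∑ r ∈ Finset.Icc c (ω - 1), 1 / (1 + κ * snr / ω * r)) +
          c / (1 + κ * snr)) := by
  set s := κ * snr
  have hs : 0 < s := mul_pos (by linarith) hsnr
  have hω₀ : (0 : ℝ) < ω := by positivity
  have hωs : (ω : ℝ) * (s / ω) = s := by field_simp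
  have hlog := log_one_add_natCast_mul_lt_mul_add_sum_Ico (div_pos hs hω₀) (by omega : 0 < ω)
    (by omega : c ≤ ω)
  rw [hωs, ← Icc_sub_one_right_eq_Ico_of_not_isMin (by simp; omega)] at hlog
  have hhead : (c : ℝ) * (s / ω) = c / ω * s ^ 2 / (1 + s) + s / ω * (c / (1 + s)) := by
    field_simp
    ring
  rw [mul_add, mul_sum]
  simp only [mul_one_div, mul_comm _ (s / ω)] at hlog ⊢
  linarith

theorem stmt_12 (snr κ : ℝ) (hsnr : 0 < snr) (hκ : 1 ≤ κ)
    (ω c : ℕ) (hω : 2 ≤ ω) (hc1 : 1 ≤ c) (hc2 : c ≤ ω - 1) :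
    Real.log (1 + κ * snr) - (c : ℝ) / ω * (κ * snr) ^ 2 / (1 + κ * snr) <
      κ * snr / ω *
        ((∑ r ∈ Finset.Icc c (ω - 1), 1 / (1 + κ * snr / ω * r)) +
          c / (1 + κ * snr)) :=
  stmt_12_general snr κ hsnr hκ ω c hω hc2
end

section
/- In the asymptotic state-evolution recursion for the (ω,Λ) base matrix, define G_c = (P/ω) Σ_{r=c}^{c+ω−1} 1/φ̄_r^0 for c ∈ {1,…,Λ}. Then (i) G_1 ≥ G_c for all c ∈ {1,…,Λ} (and by symmetry G_Λ = G_1); (ii) for every c with ω ≤ c ≤ Λ−ω+1, G_c = snr/(1 + κ·snr); and (iii) G_c ≥ snr/(1 + κ·snr) for all c ∈ {1,…,Λ}, so the minimum of G_c over c is attained at the middle columns. -/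
/-- First-iteration signal-to-effective-noise ratio `G_c = (P/ω) Σ_{r=c}^{c+ω-1} 1/φ_r^0`,
where `φ^0` is obtained from `ψ^0 ≡ 1`. -/
noncomputable def Gfirst (σ2 P : ℝ) (ω Λ : ℕ) (c : ℕ) : ℝ :=
  P / ω * ∑ r ∈ Finset.Icc c (c + ω - 1), (phiSE σ2 P ω Λ (fun _ => 1) r)⁻¹


/-!
Row `r` of the base matrix is covered by `bandDegree ω Λ r = c̄_r - c̲_r + 1` columns, so with
`ψ⁰ ≡ 1` the variance `φ̄_r⁰` is an increasing affine function of that count and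
`G_c = (P/ω) Σ_{j<ω} f(bandDegree (c + j))` for a decreasing `f`. Every count is at most `ω`,
with equality on the `ω` rows of a middle column, which gives the common lower bound. The first
column sees the counts `1, …, ω`, the last one the same counts in reverse order, and any other
column sees, termwise, at least one of these two sequences, which gives the upper bound.
-/

open Finset

def bandDegree (ω Λ r : ℕ) : ℕ := min r Λ + 1 - max 1 (r + 1 - ω)

def bandSum (f : ℕ → ℝ) (ω Λ c : ℕ) : ℝ := ∑ j ∈ range ω, f (bandDegree ω Λ (c + j))

section bandSum

variable (f : ℕ → ℝ) {ω Λ : ℕ}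

lemma bandSum_one (hωΛ : ω ≤ Λ) : bandSum f ω Λ 1 = ∑ j ∈ range ω, f (j + 1) :=
  sum_congr rfl fun j hj => by
    have := mem_range.mp hj
    congr 1
    simp only [bandDegree]
    omega

lemma bandSum_self (hωΛ : ω ≤ Λ) : bandSum f ω Λ Λ = ∑ j ∈ range ω, f (ω - j) :=
  sum_congr rfl fun j hj => by
    have := mem_range.mp hj
    congr 1
    simp only [bandDegree]
    omega

lemma bandSum_self_eq_bandSum_one (hωΛ : ω ≤ Λ) : bandSum f ω Λ Λ = bandSum f ω Λ 1 := by
  rw [bandSum_self f hωΛ, bandSum_one f hωΛ, ← sum_range_reflect]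
  refine sum_congr rfl fun j hj => ?_
  have := mem_range.mp hj
  congr 1
  omega

lemma bandSum_of_middle {c : ℕ} (hc : ω ≤ c) (hcΛ : c + ω ≤ Λ + 1) :
    bandSum f ω Λ c = ω * f ω := by
  rw [bandSum, show (ω : ℝ) * f ω = ∑ _j ∈ range ω, f ω by simp]
  refine sum_congr rfl fun j hj => ?_
  have := mem_range.mp hj
  congr 1
  simp only [bandDegree]
  omega

variable {f}

lemma mul_le_bandSum (hf : Antitone f) (c : ℕ) : ω * f ω ≤ bandSum f ω Λ c := by
  rw [bandSum, show (ω : ℝ) * f ω = ∑ _j ∈ range ω, f ω by simp]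
  refine sum_le_sum fun j _ => hf ?_
  simp only [bandDegree]
  omega

lemma bandSum_le_bandSum_one (hf : Antitone f) (hΛ : 2 * ω - 1 ≤ Λ) {c : ℕ}
    (hc : c ∈ Icc 1 Λ) : bandSum f ω Λ c ≤ bandSum f ω Λ 1 := by
  have hωΛ : ω ≤ Λ := by omega
  obtain ⟨hc1, hcΛ⟩ := mem_Icc.mp hc
  by_cases hleft : c + ω ≤ Λ + 1
  · rw [bandSum_one f hωΛ]
    refine sum_le_sum fun j hj => hf ?_
    have := mem_range.mp hj
    simp only [bandDegree]
    omega
  · rw [← bandSum_self_eq_bandSum_one f hωΛ, bandSum_self f hωΛ]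
    refine sum_le_sum fun j hj => hf ?_
    have := mem_range.mp hj
    simp only [bandDegree]
    omega

end bandSum

lemma antitone_inv_one_add_mul {σ2 A : ℝ} (hσ2 : 0 < σ2) (hA : 0 ≤ A) :
    Antitone fun n : ℕ => (σ2 * (1 + A * n))⁻¹ := fun m n hmn => by
  have hmn' : (m : ℝ) ≤ n := by exact_mod_cast hmn
  apply inv_anti₀ (by positivity)
  gcongr

lemma Gfirst_eq_bandSum (σ2 P : ℝ) {ω : ℕ} (Λ : ℕ) (hω : 1 ≤ ω) (c : ℕ) :
    Gfirst σ2 P ω Λ c = P / ω * bandSum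
      (fun n => (σ2 * (1 + ((Λ : ℝ) + ω - 1) / Λ * (P / σ2) / ω * n))⁻¹) ω Λ c := by
  have hIcc : Icc c (c + ω - 1) = Ico c (c + ω) := by
    rw [← Ico_add_one_right_eq_Icc]
    congr 1
    omega
  rw [Gfirst, hIcc, sum_Ico_eq_sum_range, Nat.add_sub_cancel_left, bandSum]
  refine congrArg _ (sum_congr rfl fun j _ => ?_)
  simp [phiSE, bandDegree, Nat.card_Icc]

theorem stmt_13 (σ2 P snr κ : ℝ) (ω Λ : ℕ)
    (hσ2 : 0 < σ2) (hP : 0 < P)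
    (hω : 1 ≤ ω) (hΛ : 2 * ω - 1 ≤ Λ)
    (hsnr : snr = P / σ2) (hκ : κ = ((Λ : ℝ) + ω - 1) / Λ) :
    (∀ c ∈ Finset.Icc 1 Λ, Gfirst σ2 P ω Λ c ≤ Gfirst σ2 P ω Λ 1) ∧
    Gfirst σ2 P ω Λ Λ = Gfirst σ2 P ω Λ 1 ∧
    (∀ c : ℕ, ω ≤ c → c ≤ Λ - ω + 1 →
      Gfirst σ2 P ω Λ c = snr / (1 + κ * snr)) ∧
    (∀ c ∈ Finset.Icc 1 Λ, snr / (1 + κ * snr) ≤ Gfirst σ2 P ω Λ c) := by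
  have hωΛ : ω ≤ Λ := by omega
  have hκ0 : 0 < κ := by
    have hωR : (1 : ℝ) ≤ ω := by exact_mod_cast hω
    have hΛR : (1 : ℝ) ≤ Λ := by exact_mod_cast (by omega : 1 ≤ Λ)
    rw [hκ]
    exact div_pos (by linarith) (by linarith)
  have hsnr0 : 0 < snr := hsnr ▸ div_pos hP hσ2
  have hf := antitone_inv_one_add_mul (A := κ * snr / ω) hσ2 (by positivity)
  have hG : ∀ c, Gfirst σ2 P ω Λ c = P / ω * bandSum _ ω Λ c := fun c => by
    rw [Gfirst_eq_bandSum σ2 P Λ hω c, ← hsnr, ← hκ]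
  have hmiddle : P / ω * (ω * (σ2 * (1 + κ * snr / ω * ω))⁻¹) = snr / (1 + κ * snr) := by
    subst hsnr
    field_simp
  refine ⟨fun c hc => ?_, ?_, fun c hc hcΛ => ?_, fun c _ => ?_⟩
  · rw [hG, hG]
    gcongr
    exact bandSum_le_bandSum_one hf hΛ hc
  · rw [hG, hG, bandSum_self_eq_bandSum_one _ hωΛ]
  · rw [hG, bandSum_of_middle _ hc (by omega), hmiddle]
  · rw [hG, ← hmiddle]
    gcongr
    exact mul_le_bandSum hf c
end
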